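/- arXiv:0911.1157 — 6 statements merged into one kernel-verified Lean document; each statement's English description precedes it below -/
import Mathlib

section
/- For every n ∈ ℕ there exists a finite subset T_n of ℂⁿ such that for every orthonormal basis b₁, …, b_n of ℂⁿ there is a vector v ∈ T_n with | |⟨v, b_i⟩| − |⟨v, b_j⟩| | > 1 for all i ≠ j. -/
/-! Prescribe the moduli `2i` for the coefficients: for each orthonormal basis `b` the vector
`w = ∑ 2i • b i` lies in the ball of radius `‖(2i)ᵢ‖`, whose compactness yields a finite `1/2`-net
`T` independent of `b`. A point of `T` near `w` has `|⟨v, b i⟩|` within `1/2` of `2i`, and distinct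
even numbers are at distance at least `2`. -/

open Metric

theorem exists_finset_forall_mem_closedBall_exists_dist_lt {X : Type*} [PseudoMetricSpace X]
    [ProperSpace X] (x : X) (R : ℝ) {ε : ℝ} (hε : 0 < ε) :
    ∃ T : Finset X, ∀ y ∈ closedBall x R, ∃ c ∈ T, dist y c < ε := by
  obtain ⟨t, ht, hcover⟩ :=
    totallyBounded_iff.mp (isCompact_closedBall x R).totallyBounded ε hε
  refine ⟨ht.toFinset, fun y hy => ?_⟩
  obtain ⟨c, hc, hyc⟩ := Set.mem_iUnion₂.mp (hcover hy)
  exact ⟨c, ht.mem_toFinset.mpr hc, hyc⟩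

theorem abs_norm_inner_sub_norm_inner_le {𝕜 E : Type*} [RCLike 𝕜] [NormedAddCommGroup E]
    [InnerProductSpace 𝕜 E] (v w u : E) :
    |‖(inner 𝕜 v u : 𝕜)‖ - ‖(inner 𝕜 w u : 𝕜)‖| ≤ ‖v - w‖ * ‖u‖ :=
  calc |‖(inner 𝕜 v u : 𝕜)‖ - ‖(inner 𝕜 w u : 𝕜)‖|
      ≤ ‖(inner 𝕜 v u : 𝕜) - inner 𝕜 w u‖ := abs_norm_sub_norm_le _ _
    _ = ‖(inner 𝕜 (v - w) u : 𝕜)‖ := by rw [inner_sub_left]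
    _ ≤ ‖v - w‖ * ‖u‖ := norm_inner_le_norm _ _

theorem OrthonormalBasis.exists_finset_forall_exists_abs_norm_inner_sub_lt {ι 𝕜 E : Type*}
    [Fintype ι] [RCLike 𝕜] [NormedAddCommGroup E] [InnerProductSpace 𝕜 E]
    [FiniteDimensional 𝕜 E] (a : EuclideanSpace 𝕜 ι) {ε : ℝ} (hε : 0 < ε) :
    ∃ T : Finset E, ∀ b : OrthonormalBasis ι 𝕜 E,
      ∃ v ∈ T, ∀ i, |‖(inner 𝕜 v (b i) : 𝕜)‖ - ‖a i‖| < ε := by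
  have : ProperSpace E := FiniteDimensional.proper 𝕜 E
  obtain ⟨T, hT⟩ := exists_finset_forall_mem_closedBall_exists_dist_lt (0 : E) ‖a‖ hε
  refine ⟨T, fun b => ?_⟩
  set w := b.repr.symm a
  have hw : w ∈ closedBall (0 : E) ‖a‖ := by
    rw [mem_closedBall, dist_zero_right, LinearIsometryEquiv.norm_map]
  obtain ⟨c, hcT, hwc⟩ := hT w hw
  refine ⟨c, hcT, fun i => ?_⟩
  have hwi : ‖(inner 𝕜 w (b i) : 𝕜)‖ = ‖a i‖ := by
    rw [norm_inner_symm, ← b.repr_apply_apply, LinearIsometryEquiv.apply_symm_apply]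
  calc |‖(inner 𝕜 c (b i) : 𝕜)‖ - ‖a i‖|
      ≤ ‖c - w‖ * ‖b i‖ := hwi ▸ abs_norm_inner_sub_norm_inner_le c w (b i)
    _ < ε := by rwa [b.orthonormal.1 i, mul_one, ← dist_eq_norm, dist_comm]

theorem one_lt_abs_sub_of_abs_sub_two_mul_lt {x y : ℝ} {i j : ℕ} (hij : i ≠ j)
    (hx : |x - 2 * i| < 1 / 2) (hy : |y - 2 * j| < 1 / 2) : 1 < |x - y| := by
  rw [abs_lt] at hx hy
  rw [lt_abs]
  rcases lt_or_gt_of_ne hij with h | h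
  · have : (i : ℝ) + 1 ≤ j := by exact_mod_cast h
    right; linarith
  · have : (j : ℝ) + 1 ≤ i := by exact_mod_cast h
    left; linarith

/-- For every `n` there is a finite subset `T` of `ℂⁿ` such that for every orthonormal basis
`b₁, …, b_n` of `ℂⁿ` some `v ∈ T` satisfies `| |⟨v,b_i⟩| − |⟨v,b_j⟩| | > 1` whenever `i ≠ j`. -/
theorem stmt5 (n : ℕ) :
    ∃ T : Finset (EuclideanSpace ℂ (Fin n)),
      ∀ b : OrthonormalBasis (Fin n) ℂ (EuclideanSpace ℂ (Fin n)),
        ∃ v ∈ T, ∀ i j : Fin n, i ≠ j →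
          1 < |‖(inner ℂ v (b i) : ℂ)‖ - ‖(inner ℂ v (b j) : ℂ)‖| := by
  set a : EuclideanSpace ℂ (Fin n) := WithLp.toLp 2 fun i => 2 * (i : ℕ)
  have ha : ∀ i, ‖a i‖ = 2 * (i : ℕ) := fun i => by simp [a]
  obtain ⟨T, hT⟩ := OrthonormalBasis.exists_finset_forall_exists_abs_norm_inner_sub_lt
    (E := EuclideanSpace ℂ (Fin n)) a one_half_pos
  refine ⟨T, fun b => ?_⟩
  obtain ⟨v, hvT, hv⟩ := hT b
  refine ⟨v, hvT, fun i j hij => one_lt_abs_sub_of_abs_sub_two_mul_lt (Fin.val_ne_of_ne hij) ?_ ?_⟩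
  · simpa only [ha] using hv i
  · simpa only [ha] using hv j
end

section
/- Let M be a self-adjoint matrix on a finite set X of size m with entries bounded by 1, normalized as an operator on L²(X) with uniform probability measure. Let λ₁, λ₂, … be its eigenvalues ordered with |λ₁| ≥ |λ₂| ≥ …, with orthonormal eigenvectors f₁, f₂, …. Then for every {0,1}-valued function h on X and every t ≥ 1: |⟨h, Mh⟩ − Σ_{j=1}^t λ_j |⟨h, f_j⟩|²| ≤ √(1/t). -/
/-!
Expanding `h` in the eigenbasis gives `⟨h, Mh⟩ = Σ_j λ_j |⟨h, f_j⟩|²`, so the error is the tail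
`Σ_{j > t} λ_j |⟨h, f_j⟩|²`. By Bessel, `Σ_j |⟨h, f_j⟩|² ≤ ‖h‖² ≤ 1`. The functions
`(x, y) ↦ f_j x · conj (f_j y)` are orthonormal in `L²(X × X)` and `M` has coefficients `λ_j` in
them, so Bessel again gives `Σ_j |λ_j|² ≤ ‖M‖² ≤ 1`; as the `|λ_j|` decrease, `|λ_j|² ≤ 1/t` for
`j > t`, which bounds the tail by `√(1/t)`.
-/

open Finset ComplexConjugate

section AvgInner

variable {Y Z ι : Type*} [Fintype Y] [Fintype Z] [Fintype ι]

/-- The inner product `⟨f, g⟩` of `L²(Y)` for the uniform probability measure. -/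
noncomputable def avgInner (f g : Y → ℂ) : ℂ := (Fintype.card Y : ℂ)⁻¹ * ∑ y, f y * conj (g y)

noncomputable def avgToEuclidean (f : Y → ℂ) : EuclideanSpace ℂ Y :=
  WithLp.toLp 2 fun y => ((√(Fintype.card Y : ℝ)⁻¹ : ℝ) : ℂ) * f y

lemma inner_avgToEuclidean (f g : Y → ℂ) :
    inner ℂ (avgToEuclidean f) (avgToEuclidean g) = avgInner g f := by
  have hsq : ((√(Fintype.card Y : ℝ)⁻¹ : ℝ) : ℂ) * ((√(Fintype.card Y : ℝ)⁻¹ : ℝ) : ℂ)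
      = (Fintype.card Y : ℂ)⁻¹ := by
    rw [← Complex.ofReal_mul, Real.mul_self_sqrt (by positivity)]
    push_cast; rfl
  simp only [avgToEuclidean, avgInner, PiLp.inner_apply, RCLike.inner_apply, map_mul,
    Complex.conj_ofReal, mul_sum, ← hsq]
  exact sum_congr rfl fun y _ => by ring

lemma norm_avgToEuclidean_sq (f : Y → ℂ) :
    ‖avgToEuclidean f‖ ^ 2 = (Fintype.card Y : ℝ)⁻¹ * ∑ y, ‖f y‖ ^ 2 := by
  rw [EuclideanSpace.norm_sq_eq, mul_sum]
  refine sum_congr rfl fun y _ => ?_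
  simp only [avgToEuclidean, PiLp.toLp_apply, norm_mul, Complex.norm_real, Real.norm_eq_abs,
    abs_of_nonneg (Real.sqrt_nonneg _), mul_pow]
  rw [Real.sq_sqrt (by positivity)]

lemma sum_norm_avgInner_sq_le [DecidableEq ι] {v : ι → Y → ℂ}
    (hv : ∀ i j, avgInner (v i) (v j) = if i = j then 1 else 0) (w : Y → ℂ) :
    ∑ i, ‖avgInner w (v i)‖ ^ 2 ≤ (Fintype.card Y : ℝ)⁻¹ * ∑ y, ‖w y‖ ^ 2 := by
  have hON : Orthonormal ℂ fun i => avgToEuclidean (v i) := by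
    rw [orthonormal_iff_ite]
    intro i j
    rw [inner_avgToEuclidean, hv]
    exact if_congr eq_comm rfl rfl
  simpa only [inner_avgToEuclidean, norm_avgToEuclidean_sq] using
    hON.sum_inner_products_le (s := univ) (avgToEuclidean w)

lemma avgInner_sum_mul_left (a : ι → ℂ) (v : ι → Y → ℂ) (g : Y → ℂ) :
    avgInner (fun y => ∑ i, a i * v i y) g = ∑ i, a i * avgInner (v i) g := by
  simp only [avgInner, sum_mul, mul_sum]
  rw [sum_comm]
  exact sum_congr rfl fun i _ => sum_congr rfl fun y _ => by ring

lemma sum_norm_sq_le_of_eq_sum [DecidableEq ι] {v : ι → Y → ℂ}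
    (hv : ∀ i j, avgInner (v i) (v j) = if i = j then 1 else 0) {a : ι → ℂ} {w : Y → ℂ}
    (hw : ∀ y, w y = ∑ i, a i * v i y) :
    ∑ i, ‖a i‖ ^ 2 ≤ (Fintype.card Y : ℝ)⁻¹ * ∑ y, ‖w y‖ ^ 2 := by
  have hcoeff : ∀ j, avgInner w (v j) = a j := fun j => by
    simp [funext hw, avgInner_sum_mul_left, hv]
  simpa only [hcoeff] using sum_norm_avgInner_sq_le hv w

lemma inv_card_mul_sum_norm_sq_le_one {w : Y → ℂ} (hw : ∀ y, ‖w y‖ ≤ 1) :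
    (Fintype.card Y : ℝ)⁻¹ * ∑ y, ‖w y‖ ^ 2 ≤ 1 := by
  calc (Fintype.card Y : ℝ)⁻¹ * ∑ y, ‖w y‖ ^ 2
      ≤ (Fintype.card Y : ℝ)⁻¹ * ∑ _y : Y, 1 := by
        gcongr with y
        exact pow_le_one₀ (norm_nonneg _) (hw y)
    _ ≤ 1 := by
        rw [sum_const, card_univ, nsmul_one]
        exact inv_mul_le_one_of_le₀ le_rfl (by positivity)

lemma avgInner_prod (a c : Y → ℂ) (b d : Z → ℂ) :
    avgInner (fun p : Y × Z => a p.1 * b p.2) (fun p => c p.1 * d p.2)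
      = avgInner a c * avgInner b d := by
  simp only [avgInner, Fintype.card_prod, Fintype.sum_prod_type, Nat.cast_mul, mul_inv, map_mul]
  rw [mul_mul_mul_comm, sum_mul_sum]
  exact congrArg _ (sum_congr rfl fun y _ => sum_congr rfl fun z _ => by ring)

lemma avgInner_conj (f g : Y → ℂ) :
    avgInner (fun y => conj (f y)) (fun y => conj (g y)) = avgInner g f := by
  simp only [avgInner, Complex.conj_conj]
  exact congrArg _ (sum_congr rfl fun y _ => mul_comm _ _)

lemma conj_avgInner (f g : Y → ℂ) : conj (avgInner f g) = avgInner g f := by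
  simp only [avgInner, map_mul, map_inv₀, map_natCast, map_sum, Complex.conj_conj]
  exact congrArg _ (sum_congr rfl fun y _ => mul_comm _ _)

lemma sum_norm_sq_le_one_of_spectral_decomposition [DecidableEq ι] {X : Type*} [Fintype X]
    {M : X → X → ℂ} (hM : ∀ x y, ‖M x y‖ ≤ 1) {f : ι → X → ℂ} {lam : ι → ℂ}
    (hf : ∀ i j, avgInner (f i) (f j) = if i = j then 1 else 0)
    (hspec : ∀ x y, M x y = ∑ j, lam j * f j x * conj (f j y)) :
    ∑ j, ‖lam j‖ ^ 2 ≤ 1 := by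
  have hv : ∀ i j, avgInner (fun p : X × X => f i p.1 * conj (f i p.2))
      (fun p => f j p.1 * conj (f j p.2)) = if i = j then 1 else 0 := by
    intro i j
    rw [avgInner_prod (f i) (f j) (fun y => conj (f i y)) (fun y => conj (f j y)),
      avgInner_conj, hf, hf]
    by_cases hij : i = j
    · simp [hij]
    · simp [hij, Ne.symm hij]
  calc ∑ j, ‖lam j‖ ^ 2 ≤ (Fintype.card (X × X) : ℝ)⁻¹ * ∑ p : X × X, ‖M p.1 p.2‖ ^ 2 :=
        sum_norm_sq_le_of_eq_sum hv fun p => by simp only [hspec, mul_assoc]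
    _ ≤ 1 := inv_card_mul_sum_norm_sq_le_one fun p => hM p.1 p.2

end AvgInner

lemma card_Iic_mul_le_sum {ι : Type*} [Fintype ι] [Preorder ι] [LocallyFiniteOrderBot ι]
    {s : ι → ℝ} (hs : Antitone s) (hs0 : ∀ i, 0 ≤ s i) (j : ι) :
    #(Iic j) * s j ≤ ∑ i, s i := by
  calc #(Iic j) * s j ≤ ∑ i ∈ Iic j, s i := by
        simpa only [nsmul_eq_mul] using card_nsmul_le_sum (Iic j) s (s j)
          fun i hi => hs (mem_Iic.1 hi)
    _ ≤ ∑ i, s i := sum_le_univ_sum_of_nonneg hs0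

lemma norm_le_sqrt_one_div_of_antitone {n : ℕ} {lam : Fin n → ℂ}
    (hord : Antitone fun i => ‖lam i‖) (hsum : ∑ i, ‖lam i‖ ^ 2 ≤ 1)
    {t : ℕ} (ht : 1 ≤ t) {j : Fin n} (hj : t ≤ j) :
    ‖lam j‖ ≤ √(1 / t) := by
  have hsq : Antitone fun i => ‖lam i‖ ^ 2 := fun i k hik =>
    pow_le_pow_left₀ (norm_nonneg _) (hord hik) 2
  have hcount := card_Iic_mul_le_sum hsq (fun i => by positivity) j
  rw [Fin.card_Iic] at hcount
  have htj : (t : ℝ) ≤ (j : ℕ) + 1 := by exact_mod_cast hj.trans (Nat.le_succ _)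
  have htpos : (0 : ℝ) < t := by exact_mod_cast ht
  rw [Real.le_sqrt (norm_nonneg _) (by positivity), le_div_iff₀ htpos]
  push_cast at hcount
  nlinarith [sq_nonneg ‖lam j‖]

lemma quadratic_form_eq_sum_eigen {X ι : Type*} [Fintype X] [Fintype ι] {M : X → X → ℂ}
    {f : ι → X → ℂ} {lam : ι → ℂ}
    (hspec : ∀ x y, M x y = ∑ j, lam j * f j x * conj (f j y)) (h : X → ℂ) :
    (Fintype.card X : ℂ)⁻¹ * ∑ x, conj (h x) * ((Fintype.card X : ℂ)⁻¹ * ∑ y, M x y * h y)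
      = ∑ j, lam j * ((‖avgInner h (f j)‖ : ℝ) : ℂ) ^ 2 := by
  have hMh : ∀ x, (Fintype.card X : ℂ)⁻¹ * ∑ y, M x y * h y
      = ∑ j, (lam j * avgInner h (f j)) * f j x := fun x => by
    simp only [avgInner, hspec, sum_mul, mul_sum]
    rw [sum_comm]
    exact sum_congr rfl fun j _ => sum_congr rfl fun y _ => by ring
  calc (Fintype.card X : ℂ)⁻¹ * ∑ x, conj (h x) * ((Fintype.card X : ℂ)⁻¹ * ∑ y, M x y * h y)
      = avgInner (fun x => ∑ j, (lam j * avgInner h (f j)) * f j x) h := by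
        simp only [avgInner, hMh, mul_comm (conj (h _))]
    _ = ∑ j, lam j * ((‖avgInner h (f j)‖ : ℝ) : ℂ) ^ 2 := by
        rw [avgInner_sum_mul_left]
        exact sum_congr rfl fun j _ => by
          rw [mul_assoc, ← conj_avgInner h (f j), Complex.mul_conj']

lemma norm_sum_mul_norm_sq_le {ι : Type*} {s : Finset ι} {a c : ι → ℂ} {B : ℝ}
    (hB : ∀ j ∈ s, ‖a j‖ ≤ B) :
    ‖∑ j ∈ s, a j * ((‖c j‖ : ℝ) : ℂ) ^ 2‖ ≤ B * ∑ j ∈ s, ‖c j‖ ^ 2 := by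
  calc ‖∑ j ∈ s, a j * ((‖c j‖ : ℝ) : ℂ) ^ 2‖ ≤ ∑ j ∈ s, ‖a j‖ * ‖c j‖ ^ 2 := by
        refine (norm_sum_le _ _).trans_eq (sum_congr rfl fun j _ => ?_)
        rw [norm_mul, norm_pow, Complex.norm_real, norm_norm]
    _ ≤ ∑ j ∈ s, B * ‖c j‖ ^ 2 := sum_le_sum fun j hj => by gcongr; exact hB j hj
    _ = B * ∑ j ∈ s, ‖c j‖ ^ 2 := (mul_sum _ _ _).symm

theorem stmt9_general {X : Type*} [Fintype X] (M : X → X → ℂ)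
    (hbdd : ∀ x y, ‖M x y‖ ≤ 1)
    (f : Fin (Fintype.card X) → X → ℂ) (lam : Fin (Fintype.card X) → ℂ)
    (horth : ∀ i j,
      (Fintype.card X : ℂ)⁻¹ * ∑ x, f i x * (starRingEnd ℂ) (f j x) = if i = j then 1 else 0)
    (hspec : ∀ x y, M x y = ∑ j, lam j * f j x * (starRingEnd ℂ) (f j y))
    (hord : ∀ i j, i ≤ j → ‖lam j‖ ≤ ‖lam i‖)
    (h : X → ℂ) (hh : ∀ x, h x = 0 ∨ h x = 1)
    (t : ℕ) (ht : 1 ≤ t) :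
    ‖((Fintype.card X : ℂ)⁻¹ * ∑ x, (starRingEnd ℂ) (h x) *
            ((Fintype.card X : ℂ)⁻¹ * ∑ y, M x y * h y)
          - ∑ j ∈ Finset.univ.filter (fun j : Fin (Fintype.card X) => (j : ℕ) < t),
              lam j * ((‖(Fintype.card X : ℂ)⁻¹ *
                ∑ x, h x * (starRingEnd ℂ) (f j x)‖ : ℝ) : ℂ) ^ 2)‖
      ≤ Real.sqrt (1 / t) := by
  have hbessel : ∑ j, ‖avgInner h (f j)‖ ^ 2 ≤ 1 :=
    (sum_norm_avgInner_sq_le horth h).trans <| inv_card_mul_sum_norm_sq_le_one fun x => by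
      rcases hh x with hx | hx <;> simp [hx]
  have htail : ∀ j ∈ univ.filter (fun j : Fin (Fintype.card X) => ¬ (j : ℕ) < t),
      ‖lam j‖ ≤ √(1 / t) := fun j hj =>
    norm_le_sqrt_one_div_of_antitone (fun i k hik => hord i k hik)
      (sum_norm_sq_le_one_of_spectral_decomposition hbdd horth hspec) ht
      (not_lt.1 (mem_filter.1 hj).2)
  change ‖_ - ∑ j ∈ _, lam j * ((‖avgInner h (f j)‖ : ℝ) : ℂ) ^ 2‖ ≤ _
  rw [quadratic_form_eq_sum_eigen hspec, ← sum_filter_add_sum_filter_not univ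
    (fun j : Fin (Fintype.card X) => (j : ℕ) < t), add_sub_cancel_left]
  calc _ ≤ √(1 / t) * ∑ j ∈ univ.filter (fun j : Fin (Fintype.card X) => ¬ (j : ℕ) < t),
          ‖avgInner h (f j)‖ ^ 2 := norm_sum_mul_norm_sq_le htail
    _ ≤ √(1 / t) * 1 := by
        gcongr
        exact (sum_le_univ_sum_of_nonneg fun j => by positivity).trans hbessel
    _ = √(1 / t) := mul_one _

/-- Let `M` be a self-adjoint kernel on a finite set `X` of size `m`, entries bounded by `1`,
with spectral decomposition `M = Σ_j λ_j f_j f_j*` over an orthonormal eigenbasis, eigenvalues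
ordered so that `|λ₁| ≥ |λ₂| ≥ …`. Then for every `{0,1}`-valued `h` and every `t ≥ 1`,
`|⟨h, Mh⟩ − Σ_{j=1}^t λ_j |⟨h,f_j⟩|²| ≤ √(1/t)`. -/
theorem stmt9 {X : Type*} [Fintype X] (M : X → X → ℂ)
    (hsa : ∀ x y, M x y = (starRingEnd ℂ) (M y x))
    (hbdd : ∀ x y, ‖M x y‖ ≤ 1)
    (f : Fin (Fintype.card X) → X → ℂ) (lam : Fin (Fintype.card X) → ℂ)
    (horth : ∀ i j,
      (Fintype.card X : ℂ)⁻¹ * ∑ x, f i x * (starRingEnd ℂ) (f j x) = if i = j then 1 else 0)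
    (hspec : ∀ x y, M x y = ∑ j, lam j * f j x * (starRingEnd ℂ) (f j y))
    (hord : ∀ i j, i ≤ j → ‖lam j‖ ≤ ‖lam i‖)
    (h : X → ℂ) (hh : ∀ x, h x = 0 ∨ h x = 1)
    (t : ℕ) (ht : 1 ≤ t) :
    ‖((Fintype.card X : ℂ)⁻¹ * ∑ x, (starRingEnd ℂ) (h x) *
            ((Fintype.card X : ℂ)⁻¹ * ∑ y, M x y * h y)
          - ∑ j ∈ Finset.univ.filter (fun j : Fin (Fintype.card X) => (j : ℕ) < t),
              lam j * ((‖(Fintype.card X : ℂ)⁻¹ *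
                ∑ x, h x * (starRingEnd ℂ) (f j x)‖ : ℝ) : ℂ) ^ 2)‖
      ≤ Real.sqrt (1 / t) :=
  stmt9_general M hbdd f lam horth hspec hord h hh t ht
end

section
/- Let A be an abelian group that is essentially torsion free, i.e. A has at most countably many elements of finite order. Then for every countable subgroup T ≤ A, the quotient group A/T is essentially torsion free. -/
/-!
A coset `a + T` is torsion in `A ⧸ T` iff `n • a ∈ T` for some `n > 0`. For fixed `n > 0` and
`t`, the solutions of `n • a = t` form a coset of the `n`-torsion of `A`, hence a countable set;
taking the union over the countably many pairs `(n, t)` with `t ∈ T` gives a countable set of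
representatives of the torsion of `A ⧸ T`.
-/

section

variable {A : Type*} [AddCommGroup A]

theorem countable_setOf_nsmul_eq (hA : {a : A | IsOfFinAddOrder a}.Countable)
    {n : ℕ} (hn : 0 < n) (t : A) : {a : A | n • a = t}.Countable := by
  rcases Set.eq_empty_or_nonempty {a : A | n • a = t} with h | ⟨a₀, ha₀⟩
  · simp [h]
  · refine (hA.image (a₀ + ·)).mono fun a (ha : n • a = t) => ?_
    have hdiff : IsOfFinAddOrder (a - a₀) :=
      isOfFinAddOrder_iff_nsmul_eq_zero.mpr ⟨n, hn, by rw [smul_sub, ha, ha₀, sub_self]⟩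
    exact ⟨a - a₀, hdiff, add_sub_cancel a₀ a⟩

theorem countable_setOf_exists_nsmul_mem (hA : {a : A | IsOfFinAddOrder a}.Countable)
    {S : Set A} (hS : S.Countable) : {a : A | ∃ n : ℕ, 0 < n ∧ n • a ∈ S}.Countable := by
  have hcover : {a : A | ∃ n : ℕ, 0 < n ∧ n • a ∈ S} =
      ⋃ n ∈ {n : ℕ | 0 < n}, ⋃ t ∈ S, {a : A | n • a = t} := by
    ext a
    simp
  rw [hcover]
  exact (Set.to_countable _).biUnion fun n hn =>
    hS.biUnion fun t _ => countable_setOf_nsmul_eq hA hn t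

theorem QuotientAddGroup.preimage_mk_setOf_isOfFinAddOrder (T : AddSubgroup A) :
    (QuotientAddGroup.mk : A → A ⧸ T) ⁻¹' {q | IsOfFinAddOrder q} =
      {a : A | ∃ n : ℕ, 0 < n ∧ n • a ∈ T} := by
  ext a
  simp only [Set.mem_preimage, Set.mem_ofPred_eq, isOfFinAddOrder_iff_nsmul_eq_zero,
    ← QuotientAddGroup.mk_nsmul, QuotientAddGroup.eq_zero_iff]

end

/-- If an abelian group `A` has at most countably many elements of finite order, then for every
countable subgroup `T ≤ A` the quotient `A/T` has at most countably many elements of finite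
order. -/
theorem stmt10 {A : Type*} [AddCommGroup A]
    (hA : Set.Countable {a : A | IsOfFinAddOrder a})
    (T : AddSubgroup A) (hT : Set.Countable (T : Set A)) :
    Set.Countable {a : A ⧸ T | IsOfFinAddOrder a} := by
  rw [← Set.image_preimage_eq {q : A ⧸ T | IsOfFinAddOrder q} QuotientAddGroup.mk_surjective,
    QuotientAddGroup.preimage_mk_setOf_isOfFinAddOrder]
  exact (countable_setOf_exists_nsmul_mem hA hT).image _
end

section
/- Let A₁, A₂ be abelian groups with A₂ essentially torsion free (at most countably many torsion elements). Let hom^c(A₁, A₂) be the subgroup of Hom(A₁, A₂) consisting of homomorphisms with countable image, and hom⁰(A₁, A₂) = Hom(A₁, A₂)/hom^c(A₁, A₂). Then hom⁰(A₁, A₂) is torsion free. -/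
/-! If `n • f` has countable image then so does `f`: the map `y ↦ n • y` sends `range f` onto
`range (n • f)`, and each of its fibres is a coset of the `n`-torsion, which is countable. -/

/-- `hom^c(A₁,A₂)`: the subgroup of `Hom(A₁,A₂)` of homomorphisms with countable image. -/
def homC (A₁ A₂ : Type*) [AddCommGroup A₁] [AddCommGroup A₂] : AddSubgroup (A₁ →+ A₂) where
  carrier := {τ : A₁ →+ A₂ | Set.Countable (Set.range τ)}
  zero_mem' := Set.Countable.mono (by simp [Set.range_subset_iff])
    (Set.countable_singleton (0 : A₂))
  add_mem' := by
    intro f g hf hg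
    refine Set.Countable.mono ?_ (Set.Countable.image2 hf hg (· + ·))
    rintro - ⟨x, rfl⟩
    exact Set.mem_image2_of_mem ⟨x, rfl⟩ ⟨x, rfl⟩
  neg_mem' := by
    intro f hf
    refine Set.Countable.mono ?_ (hf.image (fun y => -y))
    rintro - ⟨x, rfl⟩
    exact ⟨f x, ⟨x, rfl⟩, rfl⟩

theorem AddMonoidHom.preimage_singleton_subset_add_ker {G H : Type*} [AddGroup G] [AddGroup H]
    (g : G →+ H) (b : G) : g ⁻¹' {g b} ⊆ (b + ·) '' (g.ker : Set G) := by
  intro x hx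
  refine ⟨-b + x, ?_, add_neg_cancel_left b x⟩
  simp_all [AddMonoidHom.mem_ker]

theorem AddMonoidHom.countable_of_countable_image_of_countable_ker {G H : Type*} [AddGroup G]
    [AddGroup H] (g : G →+ H) (hker : (g.ker : Set G).Countable) {S : Set G}
    (hS : (g '' S).Countable) : S.Countable := by
  have hcover : S ⊆ ⋃ y ∈ g '' S, g ⁻¹' {y} := fun x hx =>
    Set.mem_biUnion (Set.mem_image_of_mem g hx) rfl
  refine (hS.biUnion ?_).mono hcover
  rintro - ⟨b, -, rfl⟩
  exact (hker.image _).mono (g.preimage_singleton_subset_add_ker b)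

theorem ker_nsmulAddMonoidHom_subset {A : Type*} [AddCommGroup A] {n : ℕ} (hn : n ≠ 0) :
    ((nsmulAddMonoidHom n : A →+ A).ker : Set A) ⊆ {a | IsOfFinAddOrder a} := fun _ ha =>
  isOfFinAddOrder_iff_nsmul_eq_zero.mpr ⟨n, Nat.pos_of_ne_zero hn, ha⟩

theorem mem_homC_of_nsmul_mem {A₁ A₂ : Type*} [AddCommGroup A₁] [AddCommGroup A₂]
    (hA₂ : Set.Countable {a : A₂ | IsOfFinAddOrder a}) {n : ℕ} (hn : n ≠ 0)
    {f : A₁ →+ A₂} (h : n • f ∈ homC A₁ A₂) : f ∈ homC A₁ A₂ := by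
  have hrange : nsmulAddMonoidHom n '' Set.range f = Set.range (n • f) :=
    (Set.range_comp _ _).symm
  exact (nsmulAddMonoidHom (α := A₂) n).countable_of_countable_image_of_countable_ker
    (hA₂.mono (ker_nsmulAddMonoidHom_subset hn)) (hrange ▸ h)

/-- If `A₂` is essentially torsion free (at most countably many torsion elements), then
`hom⁰(A₁,A₂) = Hom(A₁,A₂)/hom^c(A₁,A₂)` is torsion free. -/
theorem stmt11 {A₁ A₂ : Type*} [AddCommGroup A₁] [AddCommGroup A₂]
    (hA₂ : Set.Countable {a : A₂ | IsOfFinAddOrder a}) :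
    ∀ x : (A₁ →+ A₂) ⧸ homC A₁ A₂, ∀ n : ℕ, 0 < n → n • x = 0 → x = 0 := by
  intro x n hn hx
  induction x using QuotientAddGroup.induction_on with
  | H f =>
    rw [← QuotientAddGroup.mk_nsmul, QuotientAddGroup.eq_zero_iff] at hx
    exact (QuotientAddGroup.eq_zero_iff f).2 (mem_homC_of_nsmul_mem hA₂ hn.ne' hx)
end

section
/- Let A₁, A₂ be abelian groups. Suppose τ ∈ Hom(A₁, A₂), n ∈ ℕ with n ≥ 1, and the image of n·τ (i.e. {n·τ(x) : x ∈ A₁}) is countable. If A₂ has at most countably many elements of finite order, then the image τ(A₁) is countable. -/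
open Set

@[to_additive]
theorem MonoidHom.countable_preimage_of_countable_ker {G H : Type*} [Group G] [Group H]
    (f : G →* H) (hker : (f.ker : Set G).Countable) {s : Set H} (hs : s.Countable) :
    (f ⁻¹' s).Countable := by
  rw [← biUnion_of_singleton s, preimage_iUnion₂]
  refine hs.biUnion fun c _ ↦ ?_
  rcases (f ⁻¹' {c}).eq_empty_or_nonempty with hc | ⟨a, rfl⟩
  · simp [hc]
  · have := hker.to_subtype
    exact countable_coe_iff.mp (f.fiberEquivKer a).symm.surjective.countable

@[to_additive]
theorem ker_powMonoidHom_subset_isOfFinOrder {G : Type*} [CommGroup G] {n : ℕ} (hn : n ≠ 0) :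
    ((powMonoidHom (α := G) n).ker : Set G) ⊆ {a | IsOfFinOrder a} :=
  fun _ ha ↦ isOfFinOrder_iff_pow_eq_one.mpr ⟨n, Nat.pos_of_ne_zero hn, ha⟩

/-- If `τ : A₁ → A₂` is a homomorphism, `n ≥ 1`, the image of `n·τ` is countable, and `A₂` has
at most countably many elements of finite order, then the image `τ(A₁)` is countable. -/
theorem stmt12 {A₁ A₂ : Type*} [AddCommGroup A₁] [AddCommGroup A₂]
    (τ : A₁ →+ A₂) (n : ℕ) (hn : 1 ≤ n)
    (hnτ : Set.Countable (Set.range (n • τ)))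
    (hA₂ : Set.Countable {a : A₂ | IsOfFinAddOrder a}) :
    Set.Countable (Set.range τ) := by
  have hker : ((nsmulAddMonoidHom (α := A₂) n).ker : Set A₂).Countable :=
    hA₂.mono (ker_nsmulAddMonoidHom_subset_isOfFinAddOrder (Nat.one_le_iff_ne_zero.mp hn))
  -- `τ x` lies in the fibre of `n • ·` over `(n • τ) x`, and these fibres are cosets of the kernel.
  refine ((nsmulAddMonoidHom n).countable_preimage_of_countable_ker hker hnτ).mono ?_
  rintro _ ⟨x, rfl⟩
  exact ⟨x, rfl⟩
end

section
/- Let A be a finite abelian group and φ : A → ℂ a function with |φ(x)| = 1 for all x such that Δ_{t₁,…,t_{k+1}} φ(x) = 1 for all t₁,…,t_{k+1}, x ∈ A (a pure character of degree k). Then the function (t₁,…,t_k) ↦ Δ_{t₁,…,t_k} φ(x) is independent of x, and as a function of (t₁,…,t_k) it is a homomorphism in each variable separately (i.e. multilinear: for fixed t₂,…,t_k, the map t₁ ↦ Δ_{t₁,…,t_k}φ(0) is a group homomorphism from A to the unit circle). -/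
/-- The multiplicative difference operator `Δ_t f(x) = f(x+t) conj(f(x))`. -/
noncomputable def mDiff {A : Type*} [AddCommGroup A] (t : A) (f : A → ℂ) : A → ℂ :=
  fun x => f (x + t) * (starRingEnd ℂ) (f x)

/-- Iterated multiplicative difference `Δ_{t₁,…,t_k} f`. -/
noncomputable def mDiffList {A : Type*} [AddCommGroup A] : List A → (A → ℂ) → A → ℂ
  | [], f => f
  | t :: ts, f => mDiffList ts (mDiff t f)

/-!
For a unimodular `f`, `Δ_{a+b} f = Δ_a f · Δ_b f · Δ_{a,b} f`, and since `Δ_l` is multiplicative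
this persists after applying `Δ_{t₂,…,t_k}`. When `f` is pure of degree `k`, the last factor
`Δ_{a,b,t₂,…,t_k} f` is `1`, which gives additivity in the first variable. Constancy in `x` holds
because the unimodular function `g = Δ_{t₁,…,t_k} f` satisfies `Δ_s g ≡ 1`, i.e. `g(x+s) = g(x)`.
-/

section MultiplicativeDifference

variable {A : Type*} [AddCommGroup A]

lemma mDiffList_append (l l' : List A) (f : A → ℂ) :
    mDiffList (l ++ l') f = mDiffList l' (mDiffList l f) := by
  induction l generalizing f with
  | nil => rfl
  | cons t ts ih => exact ih _

lemma mDiff_mul (t : A) (f g : A → ℂ) :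
    mDiff t (fun x => f x * g x) = fun x => mDiff t f x * mDiff t g x := by
  funext x
  simp only [mDiff, map_mul]
  ring

lemma mDiffList_mul (l : List A) (f g : A → ℂ) :
    mDiffList l (fun x => f x * g x) = fun x => mDiffList l f x * mDiffList l g x := by
  induction l generalizing f g with
  | nil => rfl
  | cons t ts ih => simp only [mDiffList, mDiff_mul, ih]

lemma norm_mDiffList_eq_one (l : List A) {f : A → ℂ} (hf : ∀ x, ‖f x‖ = 1) (x : A) :
    ‖mDiffList l f x‖ = 1 := by
  induction l generalizing f with
  | nil => exact hf x
  | cons t ts ih => exact ih fun y => by simp [mDiff, hf]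

lemma mDiff_add {f : A → ℂ} (hf : ∀ x, ‖f x‖ = 1) (a b : A) :
    mDiff (a + b) f = fun x => mDiff a f x * mDiff b f x * mDiff b (mDiff a f) x := by
  funext x
  have hunit : ∀ y, f y * (starRingEnd ℂ) (f y) = 1 := fun y => by simp [Complex.mul_conj', hf]
  simp only [mDiff, map_mul, Complex.conj_conj, show x + b + a = x + (a + b) by abel]
  calc f (x + (a + b)) * (starRingEnd ℂ) (f x)
      = f (x + (a + b)) * (starRingEnd ℂ) (f x) *
          ((f (x + a) * (starRingEnd ℂ) (f (x + a))) *
            (f (x + b) * (starRingEnd ℂ) (f (x + b))) * (f x * (starRingEnd ℂ) (f x))) := by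
        simp only [hunit, mul_one]
    _ = _ := by ring

lemma mDiffList_cons_add {f : A → ℂ} (hf : ∀ x, ‖f x‖ = 1) (a b : A) (l : List A) (x : A) :
    mDiffList ((a + b) :: l) f x =
      mDiffList (a :: l) f x * mDiffList (b :: l) f x * mDiffList (a :: b :: l) f x := by
  simp only [mDiffList, mDiff_add hf, mDiffList_mul]

lemma apply_add_eq_of_mDiff_eq_one {g : A → ℂ} {s x : A} (hg : ‖g x‖ = 1)
    (h : mDiff s g x = 1) : g (x + s) = g x := by
  calc g (x + s) = mDiff s g x * g x := by
        simp [mDiff, mul_assoc, Complex.conj_mul', hg]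
    _ = g x := by rw [h, one_mul]

lemma mDiffList_apply_eq_of_append_singleton {f : A → ℂ} (hf : ∀ x, ‖f x‖ = 1) (l : List A)
    (h : ∀ s x, mDiffList (l ++ [s]) f x = 1) (x y : A) :
    mDiffList l f x = mDiffList l f y := by
  have hshift : ∀ s z, mDiffList l f (z + s) = mDiffList l f z := fun s z =>
    apply_add_eq_of_mDiff_eq_one (norm_mDiffList_eq_one l hf z)
      (by simpa only [mDiffList_append, mDiffList] using h s z)
  simpa using hshift (x - y) y

end MultiplicativeDifference

/-- Let `φ` be a pure character of degree `k = m+1 ≥ 1` on a finite abelian group `A`: `|φ| ≡ 1`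
and the `(k+1)`-fold iterated difference is identically `1`. Then `Δ_{t₁,…,t_k}φ(x)` does not
depend on `x`, and for fixed `t₂,…,t_k` the map `t₁ ↦ Δ_{t₁,…,t_k}φ(0)` is a homomorphism from
`A` to the unit circle (so the form is multilinear). -/
theorem stmt16 {A : Type*} [AddCommGroup A] (m : ℕ) (φ : A → ℂ)
    (hunit : ∀ x, ‖φ x‖ = 1)
    (hpure : ∀ (t : Fin (m + 2) → A) (x : A), mDiffList (List.ofFn t) φ x = 1) :
    (∀ (t : Fin (m + 1) → A) (x y : A),
        mDiffList (List.ofFn t) φ x = mDiffList (List.ofFn t) φ y) ∧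
      (∀ t : Fin (m + 1) → A, ‖mDiffList (List.ofFn t) φ 0‖ = 1) ∧
      ∀ (rest : Fin m → A) (a b : A),
        mDiffList (List.ofFn (Fin.cons (a + b) rest)) φ 0 =
          mDiffList (List.ofFn (Fin.cons a rest)) φ 0 *
            mDiffList (List.ofFn (Fin.cons b rest)) φ 0 := by
  refine ⟨fun t => mDiffList_apply_eq_of_append_singleton hunit _ fun s x => ?_,
    fun t => norm_mDiffList_eq_one _ hunit 0, fun rest a b => ?_⟩
  · simpa only [List.ofFn_succ_last, Fin.snoc_castSucc, Fin.snoc_last] using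
      hpure (Fin.snoc t s) x
  · have hcross := hpure (Fin.cons a (Fin.cons b rest)) 0
    simp only [List.ofFn_cons] at hcross ⊢
    rw [mDiffList_cons_add hunit, hcross, mul_one]
end
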